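/- arXiv:2408.02476 — 2 statements merged into one kernel-verified Lean document; each statement's English description precedes it below -/
import Mathlib

section
/- For every x ∈ ℝ₊^{2k} and all α₁, α₂ ∈ [0, δ]^{2k}: Σ_{(J,M)∈𝒥_k} p_{J,M}(x − α₁, x − α₂) · ∫_{[0,Δ]^J} 𝒱(x − α₁ + ι_J β) · ∏_{j∈J} h((x − α₁)_j, β_j) dβ ≤ 𝒱(x − α₁) · Λ(λ₀, L). (Step 1 inequality in the proof of Proposition 5.1.) -/
open MeasureTheory Finset

noncomputable section

/-- The set `𝓘_k` of admissible shortening index sets. -/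
def Ik (k : ℕ) : Finset (Finset (Fin (2*k))) :=
  Finset.univ.filter fun I =>
    I.card = k ∧ ∀ i ∈ I, ∀ j ∈ I, i ≠ j → (i : ℕ) % k ≠ (j : ℕ) % k

/-- The set `𝒥_k` of pairs of nonempty lengthening index sets. -/
def Jk (k : ℕ) : Finset (Finset (Fin (2*k)) × Finset (Fin (2*k))) :=
  Finset.univ.filter fun JM => JM.1.Nonempty ∧ JM.2.Nonempty

/-- `ι_S u` : the extension by zero of a vector indexed by `S`. -/
def emb {k : ℕ} (S : Finset (Fin (2*k))) (u : {i // i ∈ S} → ℝ) : Fin (2*k) → ℝ :=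
  fun i => if h : i ∈ S then u ⟨i, h⟩ else 0

/-- The set `𝓔_L(x)` of "large" coordinates. -/
def EL {k : ℕ} (Bmax Δ δ : ℝ) (L : ℕ) (x : Fin (2*k) → ℝ) : Finset (Fin (2*k)) :=
  Finset.univ.filter fun i => Bmax * (L : ℝ) - 2*Δ - δ < x i

/-- The one-dimensional factor `v` of the Lyapunov function. -/
def vfun (lam0 Bmax Δ δ : ℝ) (L : ℕ) (y : ℝ) : ℝ :=
  Real.exp (lam0 * max (y - Bmax * (L : ℝ) + Δ + δ) 0)

/-- The Lyapunov function `𝒱`. -/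
def Vfun {k : ℕ} (lam0 Bmax Δ δ : ℝ) (L : ℕ) (x : Fin (2*k) → ℝ) : ℝ :=
  ∏ i, vfun lam0 Bmax Δ δ L (x i)

/-- The quantity `Λ(λ, L)`. -/
def Lambda (k : ℕ) (Bmax Δ δ : ℝ)
    (p : Finset (Fin (2*k)) × Finset (Fin (2*k)) → (Fin (2*k) → ℝ) → (Fin (2*k) → ℝ) → ℝ)
    (h : ℝ → ℝ → ℝ) (lam : ℝ) (L : ℕ) : ℝ :=
  ⨆ rs : (Fin (2*k) → ℝ) × (Fin (2*k) → ℝ),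
    ∑ JM ∈ Jk k, p JM rs.1 rs.2 *
      ∏ i ∈ JM.1 ∩ EL Bmax Δ δ L rs.1,
        ∫ u in Set.Ioi (0:ℝ), Real.exp (lam * u) * h (rs.1 i) u

/-!
A jump of size `u ∈ [0, Δ]` in coordinate `i` multiplies the factor `v(x_i)` by at most `e^{λ₀ u}`,
and by at most `1` when `x_i` is not large, since then `v(x_i + u) = 1`. The integral over the box
factorizes over the jumping coordinates (Fubini), each factor is bounded by `v(x_i)` times the
exponential moment of `h(x_i, ·)` (or times `1`), and the resulting `p`-weighted sum is one of the
values whose supremum is `Λ(λ₀, L)`; these values are bounded because `h(x, ·)` lives on `[0, Δ]`.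
-/

open Set

section Lyapunov

variable {lam0 : ℝ} (Bmax Δ δ : ℝ) (L : ℕ)

lemma vfun_pos (y : ℝ) : 0 < vfun lam0 Bmax Δ δ L y :=
  Real.exp_pos _

variable {Bmax Δ δ L}

lemma vfun_add_le_mul_exp (hlam0 : 0 ≤ lam0) {y u : ℝ} (hu : 0 ≤ u) :
    vfun lam0 Bmax Δ δ L (y + u) ≤ vfun lam0 Bmax Δ δ L y * Real.exp (lam0 * u) := by
  rw [vfun, vfun, ← Real.exp_add, ← mul_add]
  gcongr
  exact max_le (by linarith [le_max_left (y - Bmax * L + Δ + δ) 0])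
    (add_nonneg (le_max_right _ _) hu)

lemma vfun_add_le_of_le (hlam0 : 0 ≤ lam0) {y u : ℝ}
    (hy : y ≤ Bmax * L - 2 * Δ - δ) (hu : u ≤ Δ) :
    vfun lam0 Bmax Δ δ L (y + u) ≤ vfun lam0 Bmax Δ δ L y := by
  rw [vfun, max_eq_right (by linarith), mul_zero, Real.exp_zero]
  exact Real.one_le_exp (mul_nonneg hlam0 (le_max_right _ _))

lemma Vfun_add_emb {k : ℕ} (J : Finset (Fin (2*k))) (r : Fin (2*k) → ℝ) (β : J → ℝ) :
    Vfun lam0 Bmax Δ δ L (r + emb J β) =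
      (∏ i ∈ Jᶜ, vfun lam0 Bmax Δ δ L (r i)) * ∏ j : J, vfun lam0 Bmax Δ δ L (r j + β j) := by
  rw [Vfun, ← prod_mul_prod_compl J, mul_comm, ← prod_coe_sort J]
  congr 1
  · exact prod_congr rfl fun i hi => by simp [emb, mem_compl.1 hi]
  · exact prod_congr rfl fun j _ => by simp [emb, j.2]

end Lyapunov

lemma setIntegral_Icc_le_mul_setIntegral_Ioi {F g : ℝ → ℝ} {c D : ℝ} (hc : 0 ≤ c)
    (hF : ∀ u ∈ Icc 0 D, 0 ≤ F u) (hFg : ∀ u ∈ Icc 0 D, F u ≤ c * g u)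
    (hg : ∀ u, 0 ≤ g u) (hgi : IntegrableOn g (Ioi 0)) :
    ∫ u in Icc 0 D, F u ≤ c * ∫ u in Ioi 0, g u := by
  have hgi' : IntegrableOn g (Ici 0) := (integrableOn_Ici_iff_integrableOn_Ioi).2 hgi
  calc ∫ u in Icc 0 D, F u ≤ ∫ u in Icc 0 D, c * g u :=
        integral_mono_of_nonneg (ae_restrict_of_forall_mem measurableSet_Icc hF)
          ((hgi'.mono_set Icc_subset_Ici_self).const_mul c)
          (ae_restrict_of_forall_mem measurableSet_Icc hFg)
    _ = c * ∫ u in Icc 0 D, g u := integral_const_mul c _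
    _ ≤ c * ∫ u in Ioi 0, g u := by
        rw [← integral_Ici_eq_integral_Ioi]
        exact mul_le_mul_of_nonneg_left
          (setIntegral_mono_set hgi' (ae_of_all _ hg) Icc_subset_Ici_self.eventuallyLE) hc

lemma IntegrableOn.exp_mul_Ioi {f : ℝ → ℝ} {D : ℝ} (hf : IntegrableOn f (Ioi 0)) (lam : ℝ)
    (hD : ∀ u, D < u → f u = 0) :
    IntegrableOn (fun u => Real.exp (lam * u) * f u) (Ioi 0) := by
  have hIcc : IntegrableOn f (Icc 0 D) :=
    (integrableOn_Icc_iff_integrableOn_Ioc).2 (hf.mono_set Ioc_subset_Ioi_self)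
  refine (hIcc.continuousOn_mul (by fun_prop) isCompact_Icc).of_forall_sdiff_eq_zero
    measurableSet_Ioi fun u hu => ?_
  have hDu : D < u := not_le.1 fun hu' => hu.2 ⟨le_of_lt hu.1, hu'⟩
  simp [hD u hDu]

lemma setIntegral_exp_mul_le {f : ℝ → ℝ} {lam D : ℝ} (hlam : 0 ≤ lam) (hf : ∀ u, 0 ≤ f u)
    (hf1 : ∫ u in Ioi 0, f u = 1) (hD : ∀ u, D < u → f u = 0) :
    ∫ u in Ioi 0, Real.exp (lam * u) * f u ≤ Real.exp (lam * D) := by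
  have hpointwise : ∀ u, Real.exp (lam * u) * f u ≤ Real.exp (lam * D) * f u := fun u => by
    rcases le_or_gt u D with hu | hu
    · exact mul_le_mul_of_nonneg_right (by gcongr) (hf u)
    · simp [hD u hu]
  calc ∫ u in Ioi 0, Real.exp (lam * u) * f u ≤ ∫ u in Ioi 0, Real.exp (lam * D) * f u :=
        integral_mono_of_nonneg (ae_of_all _ fun u => mul_nonneg (Real.exp_pos _).le (hf u))
          ((integrable_of_integral_eq_one hf1).const_mul _) (ae_of_all _ hpointwise)
    _ = Real.exp (lam * D) := by rw [integral_const_mul, hf1, mul_one]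

lemma setIntegral_univ_pi_prod {ι : Type*} [Fintype ι] (s : Set ℝ) (g : ι → ℝ → ℝ) :
    ∫ β in univ.pi (fun _ : ι => s), ∏ i, g i (β i) = ∏ i, ∫ u in s, g i u := by
  rw [volume_pi, Measure.restrict_pi_pi, integral_fintype_prod_eq_prod]

section Step

variable {lam0 : ℝ} (hlam0 : 0 ≤ lam0) {Bmax Δ δ : ℝ} {L : ℕ}
include hlam0

lemma setIntegral_vfun_add_mul_le {f : ℝ → ℝ} (hf : ∀ u, 0 ≤ f u)
    (hfi : IntegrableOn f (Ioi 0))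
    (hfe : IntegrableOn (fun u => Real.exp (lam0 * u) * f u) (Ioi 0)) (y : ℝ) :
    ∫ u in Icc 0 Δ, vfun lam0 Bmax Δ δ L (y + u) * f u ≤
      vfun lam0 Bmax Δ δ L y *
        if Bmax * L - 2 * Δ - δ < y then ∫ u in Ioi 0, Real.exp (lam0 * u) * f u
        else ∫ u in Ioi 0, f u := by
  have hF : ∀ u ∈ Icc 0 Δ, 0 ≤ vfun lam0 Bmax Δ δ L (y + u) * f u :=
    fun u _ => mul_nonneg (vfun_pos Bmax Δ δ L _).le (hf u)
  split_ifs with hy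
  · refine setIntegral_Icc_le_mul_setIntegral_Ioi (vfun_pos Bmax Δ δ L y).le hF
      (fun u hu => ?_) (fun u => mul_nonneg (Real.exp_pos _).le (hf u)) hfe
    rw [← mul_assoc]
    exact mul_le_mul_of_nonneg_right (vfun_add_le_mul_exp hlam0 hu.1) (hf u)
  · refine setIntegral_Icc_le_mul_setIntegral_Ioi (vfun_pos Bmax Δ δ L y).le hF
      (fun u hu => ?_) hf hfi
    exact mul_le_mul_of_nonneg_right (vfun_add_le_of_le hlam0 (not_lt.1 hy) hu.2) (hf u)

lemma setIntegral_Vfun_add_emb_le {h : ℝ → ℝ → ℝ} (hh : ∀ y u, 0 ≤ h y u)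
    (hh_int : ∀ y, ∫ u in Ioi 0, h y u = 1)
    (hhe : ∀ y, IntegrableOn (fun u => Real.exp (lam0 * u) * h y u) (Ioi 0))
    {k : ℕ} (J : Finset (Fin (2*k))) (r : Fin (2*k) → ℝ) :
    ∫ β : J → ℝ in univ.pi fun _ => Icc 0 Δ,
        Vfun lam0 Bmax Δ δ L (r + emb J β) * ∏ j : J, h (r j) (β j) ≤
      Vfun lam0 Bmax Δ δ L r *
        ∏ i ∈ J ∩ EL Bmax Δ δ L r, ∫ u in Ioi 0, Real.exp (lam0 * u) * h (r i) u := by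
  set v := vfun lam0 Bmax Δ δ L
  set M : Fin (2*k) → ℝ := fun i => if Bmax * L - 2 * Δ - δ < r i then
    ∫ u in Ioi 0, Real.exp (lam0 * u) * h (r i) u else 1
  have hsplit : ∀ β : J → ℝ, Vfun lam0 Bmax Δ δ L (r + emb J β) * ∏ j : J, h (r j) (β j) =
      (∏ i ∈ Jᶜ, v (r i)) * ∏ j : J, (v (r j + β j) * h (r j) (β j)) := fun β => by
    rw [Vfun_add_emb, prod_mul_distrib, mul_assoc]
  have hcoord : ∀ j : J, ∫ u in Icc 0 Δ, v (r j + u) * h (r j) u ≤ v (r j) * M j := fun j => by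
    simpa only [hh_int] using setIntegral_vfun_add_mul_le hlam0 (hh (r j))
      (integrable_of_integral_eq_one (hh_int _)) (hhe _) (r j)
  have hM : ∏ i ∈ J, M i =
      ∏ i ∈ J ∩ EL Bmax Δ δ L r, ∫ u in Ioi 0, Real.exp (lam0 * u) * h (r i) u := by
    rw [EL, inter_filter, Finset.inter_univ, prod_filter]
  calc ∫ β : J → ℝ in univ.pi fun _ => Icc 0 Δ,
          Vfun lam0 Bmax Δ δ L (r + emb J β) * ∏ j : J, h (r j) (β j)
      = (∏ i ∈ Jᶜ, v (r i)) * ∏ j : J, ∫ u in Icc 0 Δ, v (r j + u) * h (r j) u := by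
        simp_rw [hsplit]
        rw [integral_const_mul]
        exact congrArg _ (setIntegral_univ_pi_prod _ fun (j : J) u => v (r j + u) * h (r j) u)
    _ ≤ (∏ i ∈ Jᶜ, v (r i)) * ∏ j : J, (v (r j) * M j) := by
        refine mul_le_mul_of_nonneg_left (prod_le_prod (fun j _ => ?_) fun j _ => hcoord j)
          (prod_nonneg fun i _ => (vfun_pos Bmax Δ δ L _).le)
        exact setIntegral_nonneg measurableSet_Icc fun u _ =>
          mul_nonneg (vfun_pos Bmax Δ δ L _).le (hh _ _)
    _ = Vfun lam0 Bmax Δ δ L r *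
          ∏ i ∈ J ∩ EL Bmax Δ δ L r, ∫ u in Ioi 0, Real.exp (lam0 * u) * h (r i) u := by
        rw [prod_mul_distrib, prod_coe_sort J (fun i => v (r i)), prod_coe_sort J M, hM, Vfun,
          ← prod_mul_prod_compl J]
        ring

end Step

lemma sum_le_Lambda {k : ℕ} {Bmax Δ δ : ℝ}
    {p : Finset (Fin (2*k)) × Finset (Fin (2*k)) → (Fin (2*k) → ℝ) → (Fin (2*k) → ℝ) → ℝ}
    {h : ℝ → ℝ → ℝ} {lam C : ℝ} {L : ℕ}
    (hp : ∀ JM ∈ Jk k, ∀ r s, p JM r s ∈ Icc (0:ℝ) 1)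
    (hM : ∀ y, ∫ u in Ioi 0, Real.exp (lam * u) * h y u ∈ Icc 0 C) (hC : 1 ≤ C)
    (r s : Fin (2*k) → ℝ) :
    ∑ JM ∈ Jk k, p JM r s *
        ∏ i ∈ JM.1 ∩ EL Bmax Δ δ L r, ∫ u in Ioi 0, Real.exp (lam * u) * h (r i) u ≤
      Lambda k Bmax Δ δ p h lam L := by
  refine le_ciSup (f := fun rs : (Fin (2*k) → ℝ) × (Fin (2*k) → ℝ) => ∑ JM ∈ Jk k,
      p JM rs.1 rs.2 *
        ∏ i ∈ JM.1 ∩ EL Bmax Δ δ L rs.1, ∫ u in Ioi 0, Real.exp (lam * u) * h (rs.1 i) u)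
    ⟨#(Jk k) * C ^ (2 * k), ?_⟩ (r, s)
  rintro _ ⟨⟨r, s⟩, rfl⟩
  have hterm : ∀ JM ∈ Jk k, p JM r s *
      ∏ i ∈ JM.1 ∩ EL Bmax Δ δ L r, ∫ u in Ioi 0, Real.exp (lam * u) * h (r i) u ≤
        C ^ (2 * k) := fun JM hJM =>
    calc _ ≤ 1 * ∏ _i ∈ JM.1 ∩ EL Bmax Δ δ L r, C :=
          mul_le_mul (hp JM hJM r s).2 (prod_le_prod (fun i _ => (hM _).1) fun i _ => (hM _).2)
            (prod_nonneg fun i _ => (hM _).1) zero_le_one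
      _ ≤ C ^ (2 * k) := by
          rw [one_mul, prod_const]
          exact pow_le_pow_right₀ hC ((card_le_univ _).trans (by simp))
  calc _ ≤ ∑ _JM ∈ Jk k, C ^ (2 * k) := sum_le_sum hterm
    _ = #(Jk k) * C ^ (2 * k) := by rw [sum_const, nsmul_eq_mul]

theorem statement2_general
    (k : ℕ)
    (δ Δ Bmax : ℝ) (hΔ : 0 < Δ)
    (p : Finset (Fin (2*k)) × Finset (Fin (2*k)) → (Fin (2*k) → ℝ) → (Fin (2*k) → ℝ) → ℝ)
    (hp_mem : ∀ JM ∈ Jk k, ∀ r s : Fin (2*k) → ℝ, p JM r s ∈ Set.Icc (0:ℝ) 1)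
    (Δx : ℝ → ℝ) (hΔx : ∀ x, Δx x ∈ Set.Ioc (0:ℝ) Δ)
    (h : ℝ → ℝ → ℝ)
    (hh_nonneg : ∀ x u, 0 ≤ h x u)
    (hh_int : ∀ x, ∫ u in Set.Ioi (0:ℝ), h x u = 1)
    (hh_supp : ∀ x u, u ∉ Set.Icc (0:ℝ) (Δx x) → h x u = 0)
    (lam0 : ℝ) (hlam0 : 0 < lam0) (L : ℕ)
    (x : Fin (2*k) → ℝ)
    (α₁ α₂ : Fin (2*k) → ℝ) :
    (∑ JM ∈ Jk k,
        p JM (x - α₁) (x - α₂) *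
          ∫ β : {i // i ∈ JM.1} → ℝ in Set.univ.pi fun _ => Set.Icc (0:ℝ) Δ,
            Vfun lam0 Bmax Δ δ L (x - α₁ + emb JM.1 β) *
              ∏ j : {i // i ∈ JM.1}, h ((x - α₁) j.1) (β j)) ≤
      Vfun lam0 Bmax Δ δ L (x - α₁) * Lambda k Bmax Δ δ p h lam0 L := by
  set r := x - α₁
  have hsupp : ∀ y u, Δ < u → h y u = 0 := fun y u hu =>
    hh_supp y u fun hu' => (hu'.2.trans (hΔx y).2).not_gt hu
  have hhe : ∀ y, IntegrableOn (fun u => Real.exp (lam0 * u) * h y u) (Ioi 0) := fun y =>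
    IntegrableOn.exp_mul_Ioi (integrable_of_integral_eq_one (hh_int y)) lam0 (hsupp y)
  have hmoment : ∀ y, ∫ u in Ioi 0, Real.exp (lam0 * u) * h y u ∈ Icc 0 (Real.exp (lam0 * Δ)) :=
    fun y => ⟨setIntegral_nonneg measurableSet_Ioi fun u _ =>
        mul_nonneg (Real.exp_pos _).le (hh_nonneg y u),
      setIntegral_exp_mul_le hlam0.le (hh_nonneg y) (hh_int y) (hsupp y)⟩
  calc _ ≤ ∑ JM ∈ Jk k, p JM r (x - α₂) * (Vfun lam0 Bmax Δ δ L r *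
          ∏ i ∈ JM.1 ∩ EL Bmax Δ δ L r, ∫ u in Ioi 0, Real.exp (lam0 * u) * h (r i) u) :=
        sum_le_sum fun JM hJM => mul_le_mul_of_nonneg_left
          (setIntegral_Vfun_add_emb_le hlam0.le hh_nonneg hh_int hhe JM.1 r)
          (hp_mem JM hJM r (x - α₂)).1
    _ = Vfun lam0 Bmax Δ δ L r * ∑ JM ∈ Jk k, p JM r (x - α₂) *
          ∏ i ∈ JM.1 ∩ EL Bmax Δ δ L r, ∫ u in Ioi 0, Real.exp (lam0 * u) * h (r i) u := by
        rw [mul_sum]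
        exact sum_congr rfl fun _ _ => mul_left_comm _ _ _
    _ ≤ Vfun lam0 Bmax Δ δ L r * Lambda k Bmax Δ δ p h lam0 L :=
        mul_le_mul_of_nonneg_left
          (sum_le_Lambda hp_mem hmoment (Real.one_le_exp (by positivity)) r (x - α₂))
          (prod_nonneg fun i _ => (vfun_pos Bmax Δ δ L _).le)

theorem statement2
    (k : ℕ) (hk : 0 < k)
    (δ Δ Bmax : ℝ) (hδ : 0 < δ) (hΔ : 0 < Δ) (hB : Δ + δ < Bmax)
    (p : Finset (Fin (2*k)) × Finset (Fin (2*k)) → (Fin (2*k) → ℝ) → (Fin (2*k) → ℝ) → ℝ)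
    (hp_meas : ∀ JM, Measurable fun rs : (Fin (2*k) → ℝ) × (Fin (2*k) → ℝ) => p JM rs.1 rs.2)
    (hp_mem : ∀ JM ∈ Jk k, ∀ r s : Fin (2*k) → ℝ, p JM r s ∈ Set.Icc (0:ℝ) 1)
    (hp_sum : ∀ r s : Fin (2*k) → ℝ, ∑ JM ∈ Jk k, p JM r s = 1)
    (Δx : ℝ → ℝ) (hΔx : ∀ x, Δx x ∈ Set.Ioc (0:ℝ) Δ)
    (h : ℝ → ℝ → ℝ)
    (hh_meas : Measurable (Function.uncurry h))
    (hh_nonneg : ∀ x u, 0 ≤ h x u)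
    (hh_int : ∀ x, ∫ u in Set.Ioi (0:ℝ), h x u = 1)
    (hh_supp : ∀ x u, u ∉ Set.Icc (0:ℝ) (Δx x) → h x u = 0)
    (lam0 : ℝ) (hlam0 : 0 < lam0) (L : ℕ) (hL : 0 < L)
    (x : Fin (2*k) → ℝ) (hx : ∀ i, 0 ≤ x i)
    (α₁ α₂ : Fin (2*k) → ℝ)
    (hα₁ : ∀ i, α₁ i ∈ Set.Icc (0:ℝ) δ) (hα₂ : ∀ i, α₂ i ∈ Set.Icc (0:ℝ) δ) :
    (∑ JM ∈ Jk k,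
        p JM (x - α₁) (x - α₂) *
          ∫ β : {i // i ∈ JM.1} → ℝ in Set.univ.pi fun _ => Set.Icc (0:ℝ) Δ,
            Vfun lam0 Bmax Δ δ L (x - α₁ + emb JM.1 β) *
              ∏ j : {i // i ∈ JM.1}, h ((x - α₁) j.1) (β j)) ≤
      Vfun lam0 Bmax Δ δ L (x - α₁) * Lambda k Bmax Δ δ p h lam0 L :=
  statement2_general k δ Δ Bmax hΔ p hp_mem Δx hΔx h hh_nonneg hh_int hh_supp lam0 hlam0 L x α₁ α₂
end
end

section
/- Let b : ℝ₊ → ℝ₊ be measurable and locally integrable, and suppose there exist a₀ > 0 and b₀ > 0 with b(u) ≥ b₀ for all u ≥ a₀. Then for every α > 0, every a ≥ 0 and every t ≥ a₀: ∫₀^t b(a + s) · exp(−∫_a^{a+s} b(u) du) · e^{−α s} ds ≥ e^{−α a₀} − e^{−α t} − (α/(α + b₀)) · e^{−α a₀}. -/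
/-!
With the survival function `S s = exp (-∫ u in a..a + s, b u)`, which is absolutely continuous
with a.e. derivative `-b (a + s) * S s`, the fundamental theorem of calculus for absolutely
continuous functions (applied to `S s * exp (-α * s)`) gives the identity
`∫₀ᵗ b (a + s) S(s) e^{-αs} ds = 1 - S(t) e^{-αt} - α ∫₀ᵗ S(s) e^{-αs} ds`.
The last integral is bounded by splitting at `a₀`: `S ≤ 1` on `[0, a₀]`, and `b ≥ b₀` beyond `a₀`
gives `S s ≤ exp (-b₀ (s - a₀))` there.
-/

open MeasureTheory Set Filter Real

theorem LipschitzOnWith.comp_absolutelyContinuousOnInterval {X : Type*} [PseudoMetricSpace X]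
    {g : ℝ → X} {K : NNReal} {s : Set ℝ} {f : ℝ → ℝ} {a b : ℝ}
    (hg : LipschitzOnWith K g s) (hf : AbsolutelyContinuousOnInterval f a b)
    (hfs : MapsTo f (uIcc a b) s) : AbsolutelyContinuousOnInterval (g ∘ f) a b := by
  refine squeeze_zero' (Eventually.of_forall fun E ↦ Finset.sum_nonneg fun i _ ↦ dist_nonneg)
    ?_ (by simpa using Tendsto.const_mul (K : ℝ) hf)
  rw [eventually_inf_principal]
  filter_upwards with E hE
  rw [Finset.mul_sum]
  gcongr with i hi
  exact hg.dist_le_mul _ (hfs (hE.1 i hi).1) _ (hfs (hE.1 i hi).2)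

theorem ContDiff.comp_absolutelyContinuousOnInterval {g f : ℝ → ℝ} {a b : ℝ}
    (hg : ContDiff ℝ 1 g) (hf : AbsolutelyContinuousOnInterval f a b) :
    AbsolutelyContinuousOnInterval (g ∘ f) a b := by
  obtain ⟨C, hC⟩ := hf.exists_bound
  obtain ⟨K, hK⟩ := hg.contDiffOn.exists_lipschitzOnWith (s := Icc (-C) C) one_ne_zero
    (convex_Icc _ _) isCompact_Icc
  exact hK.comp_absolutelyContinuousOnInterval hf fun x hx ↦ abs_le.1 (hC x hx)

theorem integral_mul_exp_neg_integral {c : ℝ → ℝ} {a b : ℝ}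
    (hc : IntervalIntegrable c volume a b) :
    ∫ s in a..b, c s * exp (-∫ u in a..s, c u) = 1 - exp (-∫ u in a..b, c u) := by
  set C : ℝ → ℝ := fun x ↦ ∫ u in a..x, c u
  have hF : AbsolutelyContinuousOnInterval (fun x ↦ exp (-C x)) a b :=
    (contDiff_exp.comp contDiff_neg).comp_absolutelyContinuousOnInterval
      (hc.absolutelyContinuousOnInterval_intervalIntegral left_mem_uIcc)
  have hderiv : ∀ᵐ x, x ∈ uIoc a b → deriv (fun x ↦ exp (-C x)) x = -(c x * exp (-C x)) := by
    filter_upwards [hc.ae_hasDerivAt_integral] with x hx hxab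
    have hC : HasDerivAt C (c x) x := hx (uIoc_subset_uIcc hxab) a left_mem_uIcc
    rw [hC.fun_neg.exp.deriv]
    ring
  have := hF.integral_deriv_eq_sub
  rw [intervalIntegral.integral_congr_ae hderiv, intervalIntegral.integral_neg] at this
  simp only [C, intervalIntegral.integral_same, neg_zero, exp_zero] at this
  linarith

theorem integral_mul_exp_neg_integral_mul_exp {g : ℝ → ℝ} {t : ℝ}
    (hg : IntervalIntegrable g volume 0 t) (α : ℝ) :
    ∫ s in 0..t, g s * exp (-∫ u in 0..s, g u) * exp (-α * s) =
      1 - exp (-∫ u in 0..t, g u) * exp (-α * t) -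
        α * ∫ s in 0..t, exp (-∫ u in 0..s, g u) * exp (-α * s) := by
  set G : ℝ → ℝ := fun s ↦ ∫ u in 0..s, g u
  have hexp : ∀ s ∈ uIcc 0 t, exp (-∫ u in 0..s, (g u + α)) = exp (-G s) * exp (-α * s) := by
    intro s hs
    rw [intervalIntegral.integral_add (hg.mono_set (uIcc_subset_uIcc left_mem_uIcc hs))
      intervalIntegrable_const, intervalIntegral.integral_const, smul_eq_mul, sub_zero, neg_add,
      exp_add, neg_mul, mul_comm s α]
  have hE : ContinuousOn (fun s ↦ exp (-G s) * exp (-α * s)) (uIcc 0 t) :=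
    ((hg.absolutelyContinuousOnInterval_intervalIntegral left_mem_uIcc).continuousOn.neg.rexp).mul
      (by fun_prop)
  have key := integral_mul_exp_neg_integral (hg.add (intervalIntegrable_const (c := α)))
  rw [hexp t right_mem_uIcc, intervalIntegral.integral_congr fun s hs ↦ by rw [hexp s hs]] at key
  have hsplit : ∫ s in 0..t, (g s + α) * (exp (-G s) * exp (-α * s)) =
      (∫ s in 0..t, g s * exp (-G s) * exp (-α * s)) +
        α * ∫ s in 0..t, exp (-G s) * exp (-α * s) := by
    have hgE : IntervalIntegrable (fun s ↦ g s * exp (-G s) * exp (-α * s)) volume 0 t := by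
      simpa only [mul_assoc] using hg.mul_continuousOn hE
    rw [← intervalIntegral.integral_const_mul,
      ← intervalIntegral.integral_add hgE (hE.intervalIntegrable.const_mul α)]
    exact intervalIntegral.integral_congr fun s _ ↦ by ring
  simp only [G] at hsplit key ⊢
  linarith

theorem integral_exp_neg_mul {k : ℝ} (hk : k ≠ 0) (x y : ℝ) :
    ∫ s in x..y, exp (-k * s) = (exp (-k * x) - exp (-k * y)) / k := by
  rw [intervalIntegral.integral_comp_mul_left (fun s ↦ exp s) (neg_ne_zero.2 hk), integral_exp,
    smul_eq_mul]
  field_simp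
  ring

theorem mul_integral_mul_exp_neg_mul_le {S : ℝ → ℝ} {α b₀ a₀ t : ℝ} (hα : 0 < α) (hb₀ : 0 ≤ b₀)
    (ha₀ : 0 ≤ a₀) (ht : a₀ ≤ t) (hS : IntervalIntegrable S volume 0 t)
    (hS_le_one : ∀ s ∈ Icc 0 a₀, S s ≤ 1)
    (hS_le_exp : ∀ s ∈ Icc a₀ t, S s ≤ exp (-b₀ * (s - a₀))) :
    α * ∫ s in 0..t, S s * exp (-α * s) ≤ 1 - exp (-α * a₀) + α / (α + b₀) * exp (-α * a₀) := by
  have hαb₀ : 0 < α + b₀ := by linarith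
  have hSexp : IntervalIntegrable (fun s ↦ S s * exp (-α * s)) volume 0 t :=
    hS.mul_continuousOn (by fun_prop)
  have hS₁ := hSexp.mono_set (uIcc_subset_uIcc left_mem_uIcc (mem_uIcc_of_le ha₀ ht))
  have hS₂ := hSexp.mono_set (uIcc_subset_uIcc (mem_uIcc_of_le ha₀ ht) right_mem_uIcc)
  have h₁ : ∫ s in 0..a₀, S s * exp (-α * s) ≤ (1 - exp (-α * a₀)) / α := by
    calc ∫ s in 0..a₀, S s * exp (-α * s)
        ≤ ∫ s in 0..a₀, exp (-α * s) :=
          intervalIntegral.integral_mono_on ha₀ hS₁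
            ((by fun_prop : Continuous _).intervalIntegrable _ _) fun s hs ↦
            mul_le_of_le_one_left (exp_pos _).le (hS_le_one s hs)
      _ = (1 - exp (-α * a₀)) / α := by rw [integral_exp_neg_mul hα.ne', mul_zero, exp_zero]
  have h₂ : ∫ s in a₀..t, S s * exp (-α * s) ≤ exp (-α * a₀) / (α + b₀) := by
    calc ∫ s in a₀..t, S s * exp (-α * s)
        ≤ ∫ s in a₀..t, exp (b₀ * a₀) * exp (-(α + b₀) * s) := by
          refine intervalIntegral.integral_mono_on ht hS₂
            ((by fun_prop : Continuous _).intervalIntegrable _ _) fun s hs ↦ ?_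
          calc S s * exp (-α * s) ≤ exp (-b₀ * (s - a₀)) * exp (-α * s) := by
                gcongr; exact hS_le_exp s hs
            _ = exp (b₀ * a₀) * exp (-(α + b₀) * s) := by rw [← exp_add, ← exp_add]; ring_nf
      _ = exp (b₀ * a₀) * ((exp (-(α + b₀) * a₀) - exp (-(α + b₀) * t)) / (α + b₀)) := by
          rw [intervalIntegral.integral_const_mul, integral_exp_neg_mul hαb₀.ne']
      _ ≤ exp (b₀ * a₀) * (exp (-(α + b₀) * a₀) / (α + b₀)) := by
          gcongr; exact sub_le_self _ (exp_pos _).le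
      _ = exp (-α * a₀) / (α + b₀) := by rw [← mul_div_assoc, ← exp_add]; ring_nf
  rw [← intervalIntegral.integral_add_adjacent_intervals hS₁ hS₂, mul_add]
  calc α * (∫ s in 0..a₀, S s * exp (-α * s)) + α * ∫ s in a₀..t, S s * exp (-α * s)
      ≤ α * ((1 - exp (-α * a₀)) / α) + α * (exp (-α * a₀) / (α + b₀)) := by gcongr
    _ = 1 - exp (-α * a₀) + α / (α + b₀) * exp (-α * a₀) := by field_simp

theorem mul_sub_le_integral_of_nonneg_of_le {g : ℝ → ℝ} {b₀ a₀ s : ℝ} (hg : IntervalIntegrable g volume 0 s)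
    (ha₀ : 0 ≤ a₀) (hs : a₀ ≤ s) (hg_nonneg : ∀ u ∈ Icc 0 a₀, 0 ≤ g u)
    (hg_ge : ∀ u ∈ Icc a₀ s, b₀ ≤ g u) :
    b₀ * (s - a₀) ≤ ∫ u in 0..s, g u := by
  have hg₁ := hg.mono_set (uIcc_subset_uIcc left_mem_uIcc (mem_uIcc_of_le ha₀ hs))
  have hg₂ := hg.mono_set (uIcc_subset_uIcc (mem_uIcc_of_le ha₀ hs) right_mem_uIcc)
  have h₁ : 0 ≤ ∫ u in 0..a₀, g u := intervalIntegral.integral_nonneg ha₀ hg_nonneg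
  have h₂ := intervalIntegral.integral_mono_on hs intervalIntegrable_const hg₂ hg_ge
  rw [intervalIntegral.integral_const, smul_eq_mul] at h₂
  rw [← intervalIntegral.integral_add_adjacent_intervals hg₁ hg₂]
  linarith

theorem statement15_general (b : ℝ → ℝ)
    (hb_nonneg : ∀ u, 0 ≤ u → 0 ≤ b u)
    (hb_loc : LocallyIntegrableOn b (Set.Ici 0))
    (a₀ b₀ : ℝ) (ha₀ : 0 < a₀) (hb₀ : 0 < b₀)
    (hlb : ∀ u, a₀ ≤ u → b₀ ≤ b u)
    (α a t : ℝ) (hα : 0 < α) (ha : 0 ≤ a) (ht : a₀ ≤ t) :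
    Real.exp (-α * a₀) - Real.exp (-α * t) - (α / (α + b₀)) * Real.exp (-α * a₀) ≤
      ∫ s in (0:ℝ)..t,
        b (a + s) * Real.exp (-(∫ u in a..(a + s), b u)) * Real.exp (-α * s) := by
  have ht₀ : 0 ≤ t := ha₀.le.trans ht
  set g : ℝ → ℝ := fun s ↦ b (a + s)
  have hshift (s : ℝ) : ∫ u in a..a + s, b u = ∫ u in 0..s, g u := by
    simp [g, intervalIntegral.integral_comp_add_left b a]
  have hg : IntervalIntegrable g volume 0 t := by
    have hb : IntervalIntegrable b volume a (a + t) :=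
      (hb_loc.integrableOn_compact_subset (fun u hu ↦ ha.trans (by simpa [ht₀] using hu.1))
        isCompact_uIcc).intervalIntegrable
    simpa using hb.comp_add_left a
  have hg_nonneg (u : ℝ) (hu : 0 ≤ u) : 0 ≤ g u := hb_nonneg _ (by linarith)
  have hG_nonneg (s : ℝ) (hs : s ∈ Icc 0 t) : 0 ≤ ∫ u in 0..s, g u :=
    intervalIntegral.integral_nonneg hs.1 fun u hu ↦ hg_nonneg u hu.1
  have hG_ge (s : ℝ) (hs : s ∈ Icc a₀ t) : b₀ * (s - a₀) ≤ ∫ u in 0..s, g u :=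
    have hs₀ : s ∈ uIcc 0 t := mem_uIcc_of_le (ha₀.le.trans hs.1) hs.2
    mul_sub_le_integral_of_nonneg_of_le (hg.mono_set (uIcc_subset_uIcc left_mem_uIcc hs₀)) ha₀.le hs.1
      (fun u hu ↦ hg_nonneg u hu.1) fun u hu ↦ hlb _ (by linarith [hu.1])
  have hS : IntervalIntegrable (fun s ↦ exp (-∫ u in 0..s, g u)) volume 0 t :=
    (hg.absolutelyContinuousOnInterval_intervalIntegral left_mem_uIcc).continuousOn.neg.rexp
      |>.intervalIntegrable
  have hlaplace := mul_integral_mul_exp_neg_mul_le hα hb₀.le ha₀.le ht hS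
    (fun s hs ↦ exp_le_one_iff.2 (neg_nonpos.2 (hG_nonneg s ⟨hs.1, hs.2.trans ht⟩)))
    fun s hs ↦ exp_le_exp.2 (by linarith [hG_ge s hs])
  have hSt : exp (-∫ u in 0..t, g u) * exp (-α * t) ≤ exp (-α * t) :=
    mul_le_of_le_one_left (exp_pos _).le
      (exp_le_one_iff.2 (neg_nonpos.2 (hG_nonneg t ⟨ht₀, le_rfl⟩)))
  simp only [hshift]
  linarith [integral_mul_exp_neg_integral_mul_exp hg α]

theorem statement15 (b : ℝ → ℝ) (hb_meas : Measurable b)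
    (hb_nonneg : ∀ u, 0 ≤ u → 0 ≤ b u)
    (hb_loc : LocallyIntegrableOn b (Set.Ici 0))
    (a₀ b₀ : ℝ) (ha₀ : 0 < a₀) (hb₀ : 0 < b₀)
    (hlb : ∀ u, a₀ ≤ u → b₀ ≤ b u)
    (α a t : ℝ) (hα : 0 < α) (ha : 0 ≤ a) (ht : a₀ ≤ t) :
    Real.exp (-α * a₀) - Real.exp (-α * t) - (α / (α + b₀)) * Real.exp (-α * a₀) ≤
      ∫ s in (0:ℝ)..t,
        b (a + s) * Real.exp (-(∫ u in a..(a + s), b u)) * Real.exp (-α * s) :=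
  statement15_general b hb_nonneg hb_loc a₀ b₀ ha₀ hb₀ hlb α a t hα ha ht
end
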